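/- arXiv:1201.5277 — 2 statements merged into one kernel-verified Lean document; each statement's English description precedes it below -/
import Mathlib

section
/- Let 𝔤 be a finite-dimensional real Lie algebra, regarded as a normed real vector space, with a symmetric invariant bilinear form B, and for continuously differentiable maps ℓ₁, ℓ₂ : ℝ → 𝔤 set ω(ℓ₁,ℓ₂) := 2∫₀¹ B(ℓ₁(σ), ℓ₂′(σ)) dσ. Let γ : ℝ → 𝔤 be C¹ with γ(0) = 0, and let ℓ₁, ℓ₂ : ℝ → 𝔤 be C¹ with ℓ₁(0) = ℓ₁(1) = 0 and ℓ₂(0) = ℓ₂(1) = 0. Then 2∫₀¹ B(γ(σ), (⁅ℓ₁,ℓ₂⁆)′(σ)) dσ = ω(⁅γ,ℓ₁⁆, ℓ₂) + ω(ℓ₁, ⁅γ,ℓ₂⁆), where ⁅·,·⁆ denotes the pointwise Lie bracket. (This identity expresses that the mixed bracket [γ,(ℓ,c)] := ([γ,ℓ], 2∫₀¹⟨γ(σ), ℓ′(σ)⟩dσ) of Definition A.2 makes the based path algebra act on the centrally extended loop algebra by derivations.) -/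
/-- A real Lie algebra structure on a normed real vector space: the Lie bracket
lives on the same underlying additive group and scalar multiplication as the
norm (a "Lie algebra regarded as a normed real vector space"). -/
class NormedLieAlgebra (L : Type*) extends
    NormedAddCommGroup L, NormedSpace ℝ L, Bracket L L where
  add_lie : ∀ x y z : L, ⁅x + y, z⁆ = ⁅x, z⁆ + ⁅y, z⁆
  lie_add : ∀ x y z : L, ⁅x, y + z⁆ = ⁅x, y⁆ + ⁅x, z⁆
  lie_self : ∀ x : L, ⁅x, x⁆ = 0
  leibniz_lie : ∀ x y z : L, ⁅x, ⁅y, z⁆⁆ = ⁅⁅x, y⁆, z⁆ + ⁅y, ⁅x, z⁆⁆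
  lie_smul : ∀ (t : ℝ) (x y : L), ⁅x, t • y⁆ = t • ⁅x, y⁆

instance NormedLieAlgebra.toLieRing {L : Type*} [NormedLieAlgebra L] :
    LieRing L where
  add_lie := NormedLieAlgebra.add_lie
  lie_add := NormedLieAlgebra.lie_add
  lie_self := NormedLieAlgebra.lie_self
  leibniz_lie := NormedLieAlgebra.leibniz_lie

instance NormedLieAlgebra.toLieAlgebra {L : Type*} [NormedLieAlgebra L] :
    LieAlgebra ℝ L where
  lie_smul := NormedLieAlgebra.lie_smul

open intervalIntegral

/-! Integrating by parts, `∫ B(γ, [ℓ₁,ℓ₂]′) = -∫ B(γ′, [ℓ₁,ℓ₂])`: the boundary term vanishes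
because `ℓ₁` is a loop. Pointwise, `[γ,ℓ₂]′ = [γ′,ℓ₂] + [γ,ℓ₂′]` and ad-invariance
`B(y, [x,z]) = -B([x,y], z)` give `B(ℓ₁, [γ,ℓ₂]′) = -B(γ′, [ℓ₁,ℓ₂]) - B([γ,ℓ₁], ℓ₂′)`;
integrating and combining the two yields the identity. -/

namespace intervalIntegral

variable {E F G : Type*} [NormedAddCommGroup E] [NormedSpace ℝ E]
  [NormedAddCommGroup F] [NormedSpace ℝ F] [NormedAddCommGroup G] [NormedSpace ℝ G]
  [CompleteSpace G]

theorem integral_bilinear_deriv_right_eq_sub (β : E →L[ℝ] F →L[ℝ] G) {u : ℝ → E} {v : ℝ → F}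
    (hu : ContDiff ℝ 1 u) (hv : ContDiff ℝ 1 v) (a b : ℝ) :
    ∫ x in a..b, β (u x) (deriv v x)
      = β (u b) (v b) - β (u a) (v a) - ∫ x in a..b, β (deriv u x) (v x) := by
  have hu' := hu.continuous_deriv le_rfl
  have hv' := hv.continuous_deriv le_rfl
  have hderiv : ∀ x ∈ Set.uIcc a b, HasDerivAt (fun t => β (u t) (v t))
      (β (u x) (deriv v x) + β (deriv u x) (v x)) x := fun x _ =>
    β.hasDerivAt_of_bilinear (fun _ => (hu.differentiable one_ne_zero x).hasDerivAt)
      (fun _ => (hv.differentiable one_ne_zero x).hasDerivAt)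
  rw [eq_sub_iff_add_eq, ← integral_add, integral_eq_sub_of_hasDerivAt hderiv]
  · exact ((β.continuous.comp hu.continuous).clm_apply hv' |>.add
      ((β.continuous.comp hu').clm_apply hv.continuous)).intervalIntegrable a b
  · exact ((β.continuous.comp hu.continuous).clm_apply hv').intervalIntegrable a b
  · exact ((β.continuous.comp hu').clm_apply hv.continuous).intervalIntegrable a b

end intervalIntegral

section InvariantForm

variable {R L M : Type*} [CommRing R] [LieRing L] [LieAlgebra R L] [AddCommGroup M] [Module R M]

theorem apply_lie_eq_neg_apply_of_invariant (B : L →ₗ[R] L →ₗ[R] M)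
    (hinv : ∀ x y z : L, B ⁅x, y⁆ z = B x ⁅y, z⁆) (x y z : L) :
    B y ⁅x, z⁆ = -B ⁅x, y⁆ z := by
  rw [← hinv, ← lie_skew, map_neg, LinearMap.neg_apply]

end InvariantForm

namespace NormedLieAlgebra

variable {L : Type*} [NormedLieAlgebra L] [FiniteDimensional ℝ L]

noncomputable def lieL : L →L[ℝ] L →L[ℝ] L :=
  (LieAlgebra.ad ℝ L : L →ₗ[ℝ] Module.End ℝ L).toContinuousBilinearMap

theorem _root_.ContDiff.lie {n : WithTop ℕ∞} {f g : ℝ → L} (hf : ContDiff ℝ n f)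
    (hg : ContDiff ℝ n g) : ContDiff ℝ n fun t => ⁅f t, g t⁆ :=
  ((lieL (L := L)).contDiff.comp hf).clm_apply hg

theorem deriv_lie {f g : ℝ → L} {t : ℝ} (hf : DifferentiableAt ℝ f t)
    (hg : DifferentiableAt ℝ g t) :
    deriv (fun t => ⁅f t, g t⁆) t = ⁅deriv f t, g t⁆ + ⁅f t, deriv g t⁆ :=
  (lieL.deriv_of_bilinear (fun _ => hf) fun _ => hg).trans (add_comm _ _)

end NormedLieAlgebra

open NormedLieAlgebra in
theorem kacMoody_action_by_derivations_general
    {L : Type*} [NormedLieAlgebra L] [FiniteDimensional ℝ L]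
    (B : L →ₗ[ℝ] L →ₗ[ℝ] ℝ)
    (hinv : ∀ x y z : L, B ⁅x, y⁆ z = B x ⁅y, z⁆)
    (γ ℓ₁ ℓ₂ : ℝ → L)
    (hγ : ContDiff ℝ 1 γ) (h₁ : ContDiff ℝ 1 ℓ₁) (h₂ : ContDiff ℝ 1 ℓ₂)
    (h₁0 : ℓ₁ 0 = 0) (h₁1 : ℓ₁ 1 = 0) :
    (2 * ∫ σ in (0:ℝ)..1, B (γ σ) (deriv (fun τ => ⁅ℓ₁ τ, ℓ₂ τ⁆) σ))
      = (2 * ∫ σ in (0:ℝ)..1, B (⁅γ σ, ℓ₁ σ⁆) (deriv ℓ₂ σ))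
        + (2 * ∫ σ in (0:ℝ)..1, B (ℓ₁ σ) (deriv (fun τ => ⁅γ τ, ℓ₂ τ⁆) σ)) := by
  set β := B.toContinuousBilinearMap
  have hparts := integral_bilinear_deriv_right_eq_sub β hγ (h₁.lie h₂) 0 1
  simp only [β, LinearMap.toContinuousBilinearMap_apply, h₁0, h₁1, zero_lie, map_zero,
    zero_sub] at hparts
  have hexpand : ∀ σ, B (ℓ₁ σ) (deriv (fun τ => ⁅γ τ, ℓ₂ τ⁆) σ)
      = -B (deriv γ σ) ⁅ℓ₁ σ, ℓ₂ σ⁆ - B ⁅γ σ, ℓ₁ σ⁆ (deriv ℓ₂ σ) := fun σ => by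
    rw [deriv_lie (hγ.differentiable one_ne_zero σ) (h₂.differentiable one_ne_zero σ), map_add,
      apply_lie_eq_neg_apply_of_invariant B hinv, apply_lie_eq_neg_apply_of_invariant B hinv,
      hinv, sub_eq_add_neg]
  have hγ' := hγ.continuous_deriv le_rfl
  have hℓ₂' := h₂.continuous_deriv le_rfl
  rw [integral_congr fun σ _ => hexpand σ, integral_sub, integral_neg, hparts]
  · ring
  · exact ((β.continuous.comp hγ').clm_apply (h₁.lie h₂).continuous).neg.intervalIntegrable 0 1
  · exact ((β.continuous.comp (hγ.lie h₁).continuous).clm_apply hℓ₂').intervalIntegrable 0 1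

/-- Let `L` be a finite-dimensional real Lie algebra, regarded as a normed real
vector space, with a symmetric invariant bilinear form `B`, and set
`ω(ℓ₁,ℓ₂) := 2∫₀¹ B(ℓ₁(σ), ℓ₂′(σ)) dσ`.  For a `C¹` based path `γ` (`γ(0) = 0`)
and `C¹` based loops `ℓ₁, ℓ₂` (`ℓᵢ(0) = ℓᵢ(1) = 0`) one has
`2∫₀¹ B(γ(σ), ([ℓ₁,ℓ₂])′(σ)) dσ = ω([γ,ℓ₁],ℓ₂) + ω(ℓ₁,[γ,ℓ₂])`, where brackets
of `L`-valued functions are taken pointwise; i.e. the based path algebra acts on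
the centrally extended loop algebra by derivations. -/
theorem kacMoody_action_by_derivations
    {L : Type*} [NormedLieAlgebra L] [FiniteDimensional ℝ L]
    (B : L →ₗ[ℝ] L →ₗ[ℝ] ℝ)
    (hsymm : ∀ x y : L, B x y = B y x)
    (hinv : ∀ x y z : L, B ⁅x, y⁆ z = B x ⁅y, z⁆)
    (γ ℓ₁ ℓ₂ : ℝ → L)
    (hγ : ContDiff ℝ 1 γ) (h₁ : ContDiff ℝ 1 ℓ₁) (h₂ : ContDiff ℝ 1 ℓ₂)
    (hγ0 : γ 0 = 0)
    (h₁0 : ℓ₁ 0 = 0) (h₁1 : ℓ₁ 1 = 0) (h₂0 : ℓ₂ 0 = 0) (h₂1 : ℓ₂ 1 = 0) :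
    (2 * ∫ σ in (0:ℝ)..1, B (γ σ) (deriv (fun τ => ⁅ℓ₁ τ, ℓ₂ τ⁆) σ))
      = (2 * ∫ σ in (0:ℝ)..1, B (⁅γ σ, ℓ₁ σ⁆) (deriv ℓ₂ σ))
        + (2 * ∫ σ in (0:ℝ)..1, B (ℓ₁ σ) (deriv (fun τ => ⁅γ τ, ℓ₂ τ⁆) σ)) :=
  kacMoody_action_by_derivations_general B hinv γ ℓ₁ ℓ₂ hγ h₁ h₂ h₁0 h₁1
end

section
/- Let X be a topological space with an open cover {Uᵢ}_{i∈I}, let N ≥ 1, and suppose given continuous maps ρᵢ : Uᵢ → U(1) and continuous maps g_{ij} : Uᵢ ∩ Uⱼ → U(N) satisfying the cocycle condition g_{ij}(x)·g_{jk}(x) = g_{ik}(x) for all x ∈ Uᵢ ∩ Uⱼ ∩ Uₖ and the compatibility det(g_{ij}(x))·ρⱼ(x) = ρᵢ(x) for all x ∈ Uᵢ ∩ Uⱼ. Define γᵢ : Uᵢ → U(N) by γᵢ(x) := diag(ρᵢ(x)⁻¹, 1, …, 1). Then each γᵢ is continuous with det(γᵢ(x)) = ρᵢ(x)⁻¹,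 and the functions g′_{ij}(x) := γᵢ(x)·g_{ij}(x)·γⱼ(x)⁻¹ are continuous, satisfy the cocycle condition g′_{ij}(x)·g′_{jk}(x) = g′_{ik}(x) on triple intersections, and have det(g′_{ij}(x)) = 1 for all x, i.e. take values in SU(N). -/
/-!
The gauge transformation `γᵢ = diag(ρᵢ⁻¹, 1, …, 1)` is the composite of `ρᵢ⁻¹` with the continuous
homomorphic section `w ↦ diag(w, 1, …, 1)` of `det : U(N) → U(1)`, so it is continuous, unitary and
has determinant `ρᵢ⁻¹`. Conjugating a cocycle by any pointwise invertible family preserves the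
cocycle condition, and `det g′ᵢⱼ = ρᵢ⁻¹ · det gᵢⱼ · ρⱼ = 1` by the compatibility `det gᵢⱼ · ρⱼ = ρᵢ`.
-/

open Matrix

namespace Matrix

variable {n : Type*} [Fintype n] [DecidableEq n] (i : n)

theorem det_diagonal_mulSingle {R : Type*} [CommRing R] (a : R) :
    (diagonal (Pi.mulSingle i a)).det = a := by
  rw [det_diagonal, Fintype.prod_pi_mulSingle']

theorem inv_diagonal_mulSingle {K : Type*} [Field K] {a : K} (ha : a ≠ 0) :
    (diagonal (Pi.mulSingle i a))⁻¹ = diagonal (Pi.mulSingle i a⁻¹) := by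
  apply inv_eq_right_inv
  rw [diagonal_mul_diagonal, ← Pi.mul_def, ← Pi.mulSingle_mul, mul_inv_cancel₀ ha,
    Pi.mulSingle_one]
  exact diagonal_one

theorem diagonal_mulSingle_mem_unitaryGroup {R : Type*} [CommRing R] [StarRing R] {w : R}
    (hw : w ∈ unitary R) : diagonal (Pi.mulSingle i w) ∈ unitaryGroup n R := by
  rw [mem_unitaryGroup_iff', star_eq_conjTranspose, diagonal_conjTranspose, Pi.star_mulSingle,
    diagonal_mul_diagonal, ← Pi.mul_def, ← Pi.mulSingle_mul, Unitary.star_mul_self_of_mem hw,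
    Pi.mulSingle_one]
  exact diagonal_one

end Matrix

theorem Circle.coe_mem_unitary (w : Circle) : (w : ℂ) ∈ unitary ℂ := by
  rw [Unitary.mem_iff_star_mul_self, Complex.star_def, Complex.conj_mul', Circle.norm_coe]
  norm_num

theorem ContinuousOn.matrix_diagonal_mulSingle {X R n : Type*} [TopologicalSpace X]
    [TopologicalSpace R] [Zero R] [One R] [DecidableEq n] {f : X → R} {s : Set X}
    (hf : ContinuousOn f s) (i : n) : ContinuousOn (fun x => diagonal (Pi.mulSingle i (f x))) s :=
  (continuous_id.matrix_diagonal.comp (continuous_mulSingle i)).comp_continuousOn hf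

def IsCocycleOn {X ι M : Type*} [Mul M] (U : ι → Set X) (g : ι → ι → X → M) : Prop :=
  ∀ i j k, ∀ x ∈ U i ∩ U j ∩ U k, g i j x * g j k x = g i k x

theorem IsCocycleOn.matrix_gauge {X ι n R : Type*} [Fintype n] [DecidableEq n] [CommRing R]
    {U : ι → Set X} {g : ι → ι → X → Matrix n n R} (hg : IsCocycleOn U g)
    (γ : ι → X → Matrix n n R) (hγ : ∀ j, ∀ x ∈ U j, IsUnit (γ j x).det) :
    IsCocycleOn U fun i j x => γ i x * g i j x * (γ j x)⁻¹ := by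
  intro i j k x hx
  dsimp only
  rw [← hg i j k x hx]
  simp only [mul_assoc, nonsing_inv_mul_cancel_left _ _ (hγ j x hx.1.2)]

/-- Given a Čech cocycle `(ρᵢ, g_{ij})` on a cover `{Uᵢ}` of a space `X`,
consisting of continuous `U(1)`-valued functions `ρᵢ` and continuous
`U(N)`-valued transition functions `g_{ij}` satisfying the cocycle condition
and `det(g_{ij})·ρⱼ = ρᵢ` on overlaps, the gauge transformation
`γᵢ(x) = diag(ρᵢ(x)⁻¹, 1, …, 1)` is continuous with `det γᵢ = ρᵢ⁻¹`, and the
transformed transition functions `g′_{ij} = γᵢ g_{ij} γⱼ⁻¹` are continuous,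
satisfy the cocycle condition, and have determinant 1, i.e. take values in
`SU(N)`. -/
theorem unitary_cocycle_reduces_to_special_unitary
    {X : Type*} [TopologicalSpace X] {ι : Type*} {N : ℕ} (hN : 0 < N)
    (U : ι → Set X)
    (ρ : ι → X → Circle)
    (g : ι → ι → X → Matrix (Fin N) (Fin N) ℂ)
    (hρ : ∀ i, ContinuousOn (fun x => (ρ i x : ℂ)) (U i))
    (hg : ∀ i j, ContinuousOn (g i j) (U i ∩ U j))
    (hgu : ∀ i j, ∀ x ∈ U i ∩ U j, g i j x ∈ Matrix.unitaryGroup (Fin N) ℂ)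
    (hcoc : ∀ i j k, ∀ x ∈ U i ∩ U j ∩ U k, g i j x * g j k x = g i k x)
    (hcompat : ∀ i j, ∀ x ∈ U i ∩ U j, (g i j x).det * (ρ j x : ℂ) = (ρ i x : ℂ)) :
    letI γ : ι → X → Matrix (Fin N) (Fin N) ℂ := fun i x =>
      Matrix.diagonal (fun k => if k = (⟨0, hN⟩ : Fin N) then ((ρ i x : ℂ))⁻¹ else 1)
    letI g' : ι → ι → X → Matrix (Fin N) (Fin N) ℂ := fun i j x =>
      γ i x * g i j x * (γ j x)⁻¹
    (∀ i, ContinuousOn (γ i) (U i)) ∧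
    (∀ i, ∀ x ∈ U i, (γ i x).det = ((ρ i x : ℂ))⁻¹) ∧
    (∀ i j, ContinuousOn (g' i j) (U i ∩ U j)) ∧
    (∀ i j k, ∀ x ∈ U i ∩ U j ∩ U k, g' i j x * g' j k x = g' i k x) ∧
    (∀ i j, ∀ x ∈ U i ∩ U j, (g' i j x).det = 1) ∧
    (∀ i j, ∀ x ∈ U i ∩ U j, g' i j x ∈ Matrix.specialUnitaryGroup (Fin N) ℂ) := by
  set γ : ι → X → Matrix (Fin N) (Fin N) ℂ := fun i x =>
    diagonal (fun k => if k = (⟨0, hN⟩ : Fin N) then ((ρ i x : ℂ))⁻¹ else 1) with hγ_def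
  beta_reduce
  have hγ (i x) : γ i x = diagonal (Pi.mulSingle ⟨0, hN⟩ (ρ i x : ℂ)⁻¹) := by
    simp only [hγ_def, ← Pi.mulSingle_apply]
  have hγ_inv (i x) : (γ i x)⁻¹ = diagonal (Pi.mulSingle ⟨0, hN⟩ (ρ i x : ℂ)) := by
    rw [hγ, inv_diagonal_mulSingle _ (inv_ne_zero (Circle.coe_ne_zero _)), inv_inv]
  have hγ_det (i x) : (γ i x).det = (ρ i x : ℂ)⁻¹ := by
    rw [hγ, det_diagonal_mulSingle]
  have hg'_det (i j x) (hx : x ∈ U i ∩ U j) :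
      (γ i x * g i j x * (γ j x)⁻¹).det = 1 := by
    rw [det_mul, det_mul, hγ_det, hγ_inv, det_diagonal_mulSingle, mul_assoc, hcompat i j x hx,
      inv_mul_cancel₀ (Circle.coe_ne_zero _)]
  have hγ_cont (i) : ContinuousOn (γ i) (U i) :=
    (((hρ i).inv₀ fun x _ => Circle.coe_ne_zero _).matrix_diagonal_mulSingle
      (⟨0, hN⟩ : Fin N)).congr fun x _ => hγ i x
  have hγ_inv_cont (i) : ContinuousOn (fun x => (γ i x)⁻¹) (U i) :=
    ((hρ i).matrix_diagonal_mulSingle (⟨0, hN⟩ : Fin N)).congr fun x _ => hγ_inv i x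
  refine ⟨hγ_cont, fun i x _ => hγ_det i x, fun i j => ?_, ?_, hg'_det, fun i j x hx => ?_⟩
  · exact (((hγ_cont i).mono Set.inter_subset_left).mul (hg i j)).mul
      ((hγ_inv_cont j).mono Set.inter_subset_right)
  · exact IsCocycleOn.matrix_gauge hcoc γ fun j x _ => by
      rw [hγ_det]; exact (inv_ne_zero (Circle.coe_ne_zero _)).isUnit
  · refine ⟨mul_mem (mul_mem ?_ (hgu i j x hx)) ?_, hg'_det i j x hx⟩
    · rw [hγ, ← Circle.coe_inv]
      exact diagonal_mulSingle_mem_unitaryGroup _ (Circle.coe_mem_unitary _)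
    · rw [hγ_inv]
      exact diagonal_mulSingle_mem_unitaryGroup _ (Circle.coe_mem_unitary _)
end
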